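/- For α = (α_1,...,α_d) ∈ (Z≥0)^d with |α| = h, β real, and k a nonnegative integer, the generalized Jacobi polynomial admits the single-sum expression P^{(α,β)}_{d,k}(x) = (1/C_α) · ((h+1)_k/k!) · ∑_{n=0}^k A_α(n) · ((-k)_n (k+h+β+1)_n / (h+1)_n) · ((1-x)/2)^n / n!, where C_α = h!/(α_1!···α_d!) and A_α(n) = ∑_{n_1+···+n_d=n} C(n;n_1,...,n_d)·C(n+h; n_1+α_1,...,n_d+α_d). -/

import Mathlib

/-- The Pochhammer symbol `(a)_n = a(a+1)⋯(a+n-1)`. -/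
noncomputable def poch (a : ℝ) (n : ℕ) : ℝ := ∏ i ∈ Finset.range n, (a + i)

/-- The Lauricella hypergeometric function of type C. -/
noncomputable def lauricellaFC (d : ℕ) (a b : ℝ) (c : Fin d → ℝ) (x : Fin d → ℝ) : ℝ :=
  ∑' p : Fin d → ℕ,
    poch a (∑ j, p j) * poch b (∑ j, p j) / (∏ j, poch (c j) (p j)) *
      ∏ j, x j ^ p j / (p j).factorial

/-- The generalized Jacobi polynomial. -/
noncomputable def genJacobi (d : ℕ) (k : ℕ) (α : Fin d → ℝ) (β x : ℝ) : ℝ :=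
  poch ((∑ j, α j) + 1) k / k.factorial *
    lauricellaFC d (-(k : ℝ)) ((k : ℝ) + (∑ j, α j) + β + 1)
      (fun j => α j + 1) (fun _ => (1 - x) / 2)

/-- `A_α(n) = ∑_{n_1+⋯+n_d=n} C(n;n_1,…,n_d) C(n+h; n_1+α_1,…,n_d+α_d)`. -/
def Acoef (d : ℕ) (α : Fin d → ℕ) (n : ℕ) : ℕ :=
  ∑ p ∈ Finset.Nat.antidiagonalTuple d n,
    Nat.multinomial Finset.univ p * Nat.multinomial Finset.univ (fun j => p j + α j)

/-! The factor `(-k)_{|p|}` makes the Lauricella series a finite sum over the multi-indices `p`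
with `|p| ≤ k`. Group them by `n = |p|`: apart from factors depending only on `n`, the term of `p`
is `1 / (∏ (α_j+1)_{p_j} ∏ p_j!)`, and since `(α_j+1)_{p_j} = (p_j+α_j)!/α_j!` this equals
`C(n;p) C(n+h;p+α) / (C_α (h+1)_n n!)`. Summing over `|p| = n` produces `A_α(n)`. -/

open Nat

lemma poch_succ (a : ℝ) (n : ℕ) : poch a (n + 1) = poch a n * (a + n) :=
  Finset.prod_range_succ _ _

lemma poch_natCast_add_one (m n : ℕ) : poch (m + 1) n = ((m + n)! : ℝ) / m ! := by
  induction n with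
  | zero => simp [poch, (Nat.cast_pos.mpr m.factorial_pos).ne']
  | succ n ih =>
    rw [poch_succ, ih, ← add_assoc, Nat.factorial_succ]
    push_cast
    ring

lemma poch_neg_natCast_of_lt {k m : ℕ} (hkm : k < m) : poch (-k) m = 0 :=
  Finset.prod_eq_zero (Finset.mem_range.mpr hkm) (by simp)

lemma tsum_eq_sum_range_antidiagonalTuple {M : Type*} [AddCommMonoid M] [TopologicalSpace M]
    {d : ℕ} (k : ℕ) (f : (Fin d → ℕ) → M) (hf : ∀ p, k < ∑ j, p j → f p = 0) :
    ∑' p, f p = ∑ n ∈ Finset.range (k + 1), ∑ p ∈ Finset.Nat.antidiagonalTuple d n, f p := by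
  classical
  have hdisj : Set.PairwiseDisjoint ↑(Finset.range (k + 1)) (Finset.Nat.antidiagonalTuple d) := by
    intro a _ b _ hab
    refine Finset.disjoint_left.mpr fun p hpa hpb => hab ?_
    rw [Finset.Nat.mem_antidiagonalTuple] at hpa hpb
    exact hpa ▸ hpb
  rw [← Finset.sum_biUnion hdisj]
  refine tsum_eq_sum fun p hp => hf p ?_
  by_contra! hle
  exact hp (Finset.mem_biUnion.mpr
    ⟨_, Finset.mem_range.mpr (Nat.lt_succ_of_le hle), Finset.Nat.mem_antidiagonalTuple.mpr rfl⟩)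

lemma inv_prod_poch_mul_prod_factorial {d : ℕ} (α p : Fin d → ℕ) :
    1 / ((∏ j, poch (α j + 1) (p j)) * ∏ j, ((p j)! : ℝ)) =
      Nat.multinomial Finset.univ p * Nat.multinomial Finset.univ (fun j => p j + α j) /
        (Nat.multinomial Finset.univ α * poch ((∑ j, α j : ℕ) + 1) (∑ j, p j) * (∑ j, p j)!) := by
  have factorial_sum (f : Fin d → ℕ) :
      ((∑ j, f j)! : ℝ) = (∏ j, ((f j)! : ℝ)) * Nat.multinomial Finset.univ f := by
    exact_mod_cast (Nat.multinomial_spec Finset.univ f).symm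
  have multinomial_pos (f : Fin d → ℕ) : (0 : ℝ) < Nat.multinomial Finset.univ f := by
    exact_mod_cast Nat.multinomial_pos Finset.univ f
  have prod_factorial_pos (f : Fin d → ℕ) : (0 : ℝ) < ∏ j, ((f j)! : ℝ) :=
    Finset.prod_pos fun j _ => Nat.cast_pos.mpr (f j).factorial_pos
  simp only [poch_natCast_add_one, Finset.prod_div_distrib, add_comm (α _)]
  rw [add_comm, ← Finset.sum_add_distrib, factorial_sum p, factorial_sum α,
    factorial_sum fun j => p j + α j]
  field_simp [(multinomial_pos _).ne', (prod_factorial_pos _).ne']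

/-- For `α ∈ (ℤ≥0)^d` with `|α| = h`, the generalized Jacobi polynomial has the
single-sum expression
`P^{(α,β)}_{d,k}(x) = (1/C_α) ((h+1)_k/k!)
  ∑_{n=0}^k A_α(n) ((-k)_n (k+h+β+1)_n/(h+1)_n) ((1-x)/2)^n/n!`,
where `C_α = h!/(α₁!⋯α_d!)`. -/
theorem genJacobi_single_sum (d : ℕ) (α : Fin d → ℕ) (h : ℕ) (hh : h = ∑ j, α j)
    (β x : ℝ) (k : ℕ) :
    genJacobi d k (fun j => (α j : ℝ)) β x =
      (1 / (Nat.multinomial Finset.univ α : ℝ)) * (poch ((h : ℝ) + 1) k / k.factorial) *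
        ∑ n ∈ Finset.range (k + 1), (Acoef d α n : ℝ) *
          (poch (-(k : ℝ)) n * poch ((k : ℝ) + h + β + 1) n / poch ((h : ℝ) + 1) n) *
          ((1 - x) / 2) ^ n / n.factorial := by
  have hsum : ∑ j, (α j : ℝ) = h := by rw [hh, Nat.cast_sum]
  rw [genJacobi, lauricellaFC, hsum, tsum_eq_sum_range_antidiagonalTuple k _
    fun p hp => by rw [poch_neg_natCast_of_lt hp, zero_mul, zero_div, zero_mul],
    mul_comm (1 / _), mul_assoc]
  congr 1
  rw [Finset.mul_sum]
  refine Finset.sum_congr rfl fun n _ => ?_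
  simp only [Acoef, Nat.cast_sum, Nat.cast_mul, Finset.sum_mul, Finset.sum_div, Finset.mul_sum]
  refine Finset.sum_congr rfl fun p hp => ?_
  rw [Finset.Nat.mem_antidiagonalTuple] at hp
  set y := (1 - x) / 2
  calc _ = poch (-k) n * poch (k + h + β + 1) n * y ^ n *
          (1 / ((∏ j, poch (α j + 1) (p j)) * ∏ j, ((p j)! : ℝ))) := by
        rw [Finset.prod_div_distrib, Finset.prod_pow_eq_pow_sum, hp]
        ring
    _ = _ := by
        rw [inv_prod_poch_mul_prod_factorial, hp, ← hh]
        field_simp
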